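/- The genus-one curve C₁₆ : y² = (x²−4)(x²+4) over ℚ has exactly two affine rational points: (2, 0) and (−2, 0). -/

import Mathlib

private lemma natAbs_lt_of_sq_lt {q a : ℤ} (h : q ^ 2 < a ^ 2) : q.natAbs < a.natAbs := by
  by_contra hh
  push_neg at hh
  have h2 : a ^ 2 ≤ q ^ 2 := by
    rw [← sq_abs a, ← sq_abs q, Int.abs_eq_natAbs, Int.abs_eq_natAbs]
    exact pow_le_pow_left₀ (by positivity) (by exact_mod_cast hh) 2
  omega

private lemma natAbs_lt_of_pow4_lt {u a : ℤ} (hu : u ≠ 0) (ha : 0 < a) (h : u ^ 4 < a) :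
    u.natAbs < a.natAbs := by
  have h1 : (u.natAbs : ℤ) ≤ u ^ 4 := by
    rw [← Int.abs_eq_natAbs]
    calc |u| ≤ |u| ^ 4 := le_self_pow₀ (Int.one_le_abs hu) (by norm_num)
      _ = |u ^ 4| := by rw [abs_pow]
      _ = u ^ 4 := abs_of_nonneg (by positivity)
  have h2 : (a.natAbs : ℤ) = a := Int.natAbs_of_nonneg ha.le
  omega

private lemma sq_of_coprime' {a b c : ℤ} (h : IsCoprime a b)
    (heq : a * b = c ^ 2 ∨ a * b = -(c ^ 2)) : ∃ a0, a = a0 ^ 2 ∨ a = -a0 ^ 2 := by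
  rcases heq with heq | heq
  · exact Int.sq_of_isCoprime h heq
  · obtain ⟨u, hu⟩ := Int.sq_of_isCoprime h.neg_left
      (show -a * b = c ^ 2 by linear_combination -heq)
    refine ⟨u, ?_⟩
    rcases hu with hu | hu
    · right; linarith
    · left; linarith

set_option maxHeartbeats 2000000 in
private lemma pos_pos_of_mul_pos_add_pos {P Q : ℤ} (hprod : 0 < P * Q) (hsum : 0 < P + Q) :
    0 < P ∧ 0 < Q := by
  constructor <;> nlinarith

private lemma sq_lt_sq_of_pow4_lt {x y : ℤ} (h : x ^ 4 < y ^ 4) : x ^ 2 < y ^ 2 := by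
  nlinarith [add_nonneg (sq_nonneg x) (sq_nonneg y)]

set_option maxHeartbeats 2000000 in
private theorem fermat44_pos (n : ℕ)
    (IH : ∀ m, m < n → ∀ a b c : ℤ, a.natAbs ≤ m → a ^ 4 = b ^ 4 + c ^ 2 → b = 0 ∨ c = 0)
    (a b c : ℤ) (ha : 0 < a) (hb : 0 < b) (hc : 0 < c) (han : a.natAbs ≤ n)
    (h : a ^ 4 = b ^ 4 + c ^ 2) : False := by
  rcases Nat.lt_or_ge 1 (Int.gcd a b) with hg | hg
  · -- non-primitive: divide out the gcd
    have hg2 : (2 : ℤ) ≤ (Int.gcd a b : ℤ) := by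
      have : 2 ≤ Int.gcd a b := hg
      exact_mod_cast this
    set g : ℤ := (Int.gcd a b : ℤ) with hgdef
    obtain ⟨a1, ha1⟩ : g ∣ a := Int.gcd_dvd_left a b
    obtain ⟨b1, hb1⟩ : g ∣ b := Int.gcd_dvd_right a b
    have hg0 : g ≠ 0 := by omega
    have hgc : g ^ 2 ∣ c := by
      rw [← Int.pow_dvd_pow_iff (two_ne_zero)]
      refine ⟨a1 ^ 4 - b1 ^ 4, ?_⟩
      rw [ha1, hb1] at h
      linear_combination -h
    obtain ⟨c1, hc1⟩ := hgc
    have h1 : a1 ^ 4 = b1 ^ 4 + c1 ^ 2 := by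
      have h2 : g ^ 4 * a1 ^ 4 = g ^ 4 * (b1 ^ 4 + c1 ^ 2) := by
        rw [ha1, hb1, hc1] at h
        linear_combination h
      exact mul_left_cancel₀ (pow_ne_zero 4 hg0) h2
    have ha1pos : 0 < a1 := by
      by_contra h'
      push_neg at h'
      have h2 : g * a1 ≤ 0 := mul_nonpos_of_nonneg_of_nonpos (by omega) h'
      rw [← ha1] at h2
      omega
    have hlt : a1.natAbs < n := by
      have h2 : 2 * a1 ≤ g * a1 := mul_le_mul_of_nonneg_right hg2 ha1pos.le
      rw [← ha1] at h2
      omega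
    rcases IH a1.natAbs hlt a1 b1 c1 le_rfl h1 with h0 | h0
    · rw [h0, mul_zero] at hb1; omega
    · rw [h0, mul_zero] at hc1; omega
  · -- primitive case
    have hg1 : Int.gcd a b = 1 := by
      have : Int.gcd a b ≠ 0 := fun h0 => by
        have := Int.gcd_eq_zero_iff.mp h0; omega
      omega
    have hco : IsCoprime a b := Int.isCoprime_iff_gcd_eq_one.mpr hg1
    -- a is odd
    have ha_odd : a % 2 = 1 := by
      rcases Int.emod_two_eq a with h2 | h2
      · exfalso
        have hb_odd : b % 2 = 1 := by
          rcases Int.emod_two_eq b with hb2 | hb2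
          · exfalso
            have hd : (2 : ℤ) ∣ (Int.gcd a b : ℤ) :=
              Int.dvd_coe_gcd (Int.dvd_of_emod_eq_zero h2) (Int.dvd_of_emod_eq_zero hb2)
            rw [hg1] at hd; norm_num at hd
          · exact hb2
        obtain ⟨k, hk⟩ : (2:ℤ) ∣ a := Int.dvd_of_emod_eq_zero h2
        obtain ⟨l, hl⟩ : ∃ l, b = 2 * l + 1 := ⟨b / 2, by omega⟩
        have hcast : ((a ^ 4 : ℤ) : ZMod 4) = ((b ^ 4 + c ^ 2 : ℤ) : ZMod 4) := by rw [h]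
        rw [hk, hl] at hcast
        push_cast at hcast
        revert hcast
        generalize (k : ZMod 4) = K
        generalize (l : ZMod 4) = L
        generalize (c : ZMod 4) = C
        revert K L C
        decide
      · exact h2
    -- a is coprime to c
    have hac : IsCoprime a c := by
      obtain ⟨x, y, hxy⟩ := hco.pow_right (n := 4)
      exact ⟨x + y * a ^ 3, -y * c, by linear_combination hxy + y * h⟩
    rcases Int.emod_two_eq b with hb2 | hb2
    · -- CASE: b even
      obtain ⟨b1, hb1⟩ : (2:ℤ) ∣ b := Int.dvd_of_emod_eq_zero hb2
      have hb1pos : 0 < b1 := by omega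
      have hc_odd : c % 2 = 1 := by
        rcases Int.emod_two_eq c with hc2 | hc2
        · exfalso
          obtain ⟨m, hm⟩ : (2:ℤ) ∣ c := Int.dvd_of_emod_eq_zero hc2
          obtain ⟨i, hi⟩ : ∃ i, a = 2 * i + 1 := ⟨a / 2, by omega⟩
          rw [hi, hb1, hm] at h
          have h2 : 2 * (8*i^4 + 16*i^3 + 12*i^2 + 4*i) + 1 = 2 * (8*b1^4 + 2*m^2) := by
            linear_combination h
          omega
        · exact hc2
      obtain ⟨i, hi⟩ : ∃ i, a = 2 * i + 1 := ⟨a / 2, by omega⟩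
      obtain ⟨k, hk⟩ : ∃ k, c = 2 * k + 1 := ⟨c / 2, by omega⟩
      obtain ⟨P, hP⟩ : ∃ P, a ^ 2 - c = 2 * P := ⟨2*i^2+2*i-k, by rw [hi, hk]; ring⟩
      obtain ⟨Q, hQ⟩ : ∃ Q, a ^ 2 + c = 2 * Q := ⟨2*i^2+2*i+k+1, by rw [hi, hk]; ring⟩
      have hPQ : P * Q = (2 * b1 ^ 2) ^ 2 := by
        have h4 : (4:ℤ) * (P * Q) = 4 * (2 * b1 ^ 2) ^ 2 := by
          rw [hb1] at h
          linear_combination -(a^2 + c) * hP - 2 * P * hQ + h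
        exact mul_left_cancel₀ (by norm_num) h4
      have hPQco : IsCoprime P Q := by
        obtain ⟨x, y, hxy⟩ := (hac.pow_left (m := 2) : IsCoprime (a ^ 2) c)
        refine ⟨x - y, x + y, mul_left_cancel₀ (two_ne_zero) ?_⟩
        linear_combination 2 * hxy - (x - y) * hP - (x + y) * hQ
      have hprod : 0 < P * Q := by rw [hPQ]; positivity
      have hsum : P + Q = a ^ 2 := by linarith
      obtain ⟨hPpos, hQpos⟩ : 0 < P ∧ 0 < Q :=
        pos_pos_of_mul_pos_add_pos hprod (by rw [hsum]; positivity)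
      obtain ⟨p, hpor⟩ := Int.sq_of_isCoprime hPQco hPQ
      have hp : P = p ^ 2 := by
        rcases hpor with h' | h'
        · exact h'
        · exfalso; linarith [sq_nonneg p]
      obtain ⟨q, hqor⟩ := Int.sq_of_isCoprime (c := 2 * b1 ^ 2) hPQco.symm
        (by linear_combination hPQ)
      have hq : Q = q ^ 2 := by
        rcases hqor with h' | h'
        · exact h'
        · exfalso; linarith [sq_nonneg q]
      rw [hp] at hPpos hPQ hsum hPQco
      rw [hq] at hQpos hPQ hsum hPQco
      have hp0 : p ≠ 0 := fun h0 => by rw [h0] at hPpos; norm_num at hPpos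
      have hq0 : q ≠ 0 := fun h0 => by rw [h0] at hQpos; norm_num at hQpos
      have hco_pq : IsCoprime p q :=
        IsCoprime.of_isCoprime_of_dvd_left
          (IsCoprime.of_isCoprime_of_dvd_right hPQco (dvd_pow_self q two_ne_zero))
          (dvd_pow_self p two_ne_zero)
      -- the inner classification argument, applied to whichever of p, q is odd
      have inner : ∀ x y : ℤ, y ≠ 0 → x % 2 = 1 → IsCoprime x y →
          x ^ 2 + y ^ 2 = a ^ 2 → x ^ 2 * y ^ 2 = (2 * b1 ^ 2) ^ 2 → False := by
        intro x y hy0 hx_odd hxyco hsum2 hprod2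
        have ht : PythagoreanTriple x y a := by
          show x * x + y * y = a * a
          linear_combination hsum2
        obtain ⟨m, nn, hxm, hym, ham, hmn, _hparity, _hm0⟩ :=
          PythagoreanTriple.coprime_classification' ht
            (Int.isCoprime_iff_gcd_eq_one.mp hxyco) hx_odd ha
        have hm_ne : m ≠ 0 := by
          rintro rfl; rw [hym] at hy0; simp at hy0
        have hn_ne : nn ≠ 0 := by
          rintro rfl; rw [hym] at hy0; simp at hy0
        have hmnco : IsCoprime m nn := Int.isCoprime_iff_gcd_eq_one.mpr hmn
        have hsq : (m * nn * (m ^ 2 - nn ^ 2)) ^ 2 = (b1 ^ 2) ^ 2 := by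
          have h4 : (4:ℤ) * (m * nn * (m ^ 2 - nn ^ 2)) ^ 2 = 4 * (b1 ^ 2) ^ 2 := by
            rw [hxm, hym] at hprod2
            linear_combination hprod2
          exact mul_left_cancel₀ (by norm_num) h4
        have hE := eq_or_eq_neg_of_sq_eq_sq _ _ hsq
        -- coprimality facts
        have hm_diff : IsCoprime m (m ^ 2 - nn ^ 2) := by
          have h1 : IsCoprime m (-(nn ^ 2) + m * m) :=
            (hmnco.pow_right.neg_right).add_mul_left_right m
          have h2 : m ^ 2 - nn ^ 2 = -(nn ^ 2) + m * m := by ring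
          rw [h2]; exact h1
        have hn_diff : IsCoprime nn (m ^ 2 - nn ^ 2) := by
          have h1 : IsCoprime nn (m * m + nn * (-nn)) :=
            (hmnco.symm.mul_right hmnco.symm).add_mul_left_right (-nn)
          have h2 : m ^ 2 - nn ^ 2 = m * m + nn * (-nn) := by ring
          rw [h2]; exact h1
        -- extract fourth powers
        obtain ⟨u, hu⟩ := sq_of_coprime' (hmnco.mul_right hm_diff)
          (show m * (nn * (m ^ 2 - nn ^ 2)) = b1 ^ 2 ∨
                m * (nn * (m ^ 2 - nn ^ 2)) = -(b1 ^ 2) by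
            rcases hE with h' | h'
            exacts [Or.inl (by linear_combination h'), Or.inr (by linear_combination h')])
        have hu4 : m ^ 2 = u ^ 4 := by rcases hu with h' | h' <;> rw [h'] <;> ring
        obtain ⟨v, hv⟩ := sq_of_coprime' (hmnco.symm.mul_right hn_diff)
          (show nn * (m * (m ^ 2 - nn ^ 2)) = b1 ^ 2 ∨
                nn * (m * (m ^ 2 - nn ^ 2)) = -(b1 ^ 2) by
            rcases hE with h' | h'
            exacts [Or.inl (by linear_combination h'), Or.inr (by linear_combination h')])
        have hv4 : nn ^ 2 = v ^ 4 := by rcases hv with h' | h' <;> rw [h'] <;> ring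
        obtain ⟨w, hw⟩ := sq_of_coprime' (hm_diff.symm.mul_right hn_diff.symm)
          (show (m ^ 2 - nn ^ 2) * (m * nn) = b1 ^ 2 ∨
                (m ^ 2 - nn ^ 2) * (m * nn) = -(b1 ^ 2) by
            rcases hE with h' | h'
            exacts [Or.inl (by linear_combination h'), Or.inr (by linear_combination h')])
        -- bounds for the descent
        have hma : m ^ 2 < a := by
          have h1 : 0 < nn ^ 2 := by positivity
          linarith [ham.ge, ham.le]
        have hna : nn ^ 2 < a := by
          have h1 : 0 < m ^ 2 := by positivity
          linarith [ham.ge, ham.le]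
        have hu0 : u ≠ 0 := fun h0 => by
          rw [h0] at hu4
          exact hm_ne (pow_eq_zero_iff two_ne_zero |>.mp (by linarith [hu4] : m ^ 2 = 0))
        have hv0 : v ≠ 0 := fun h0 => by
          rw [h0] at hv4
          exact hn_ne (pow_eq_zero_iff two_ne_zero |>.mp (by linarith [hv4] : nn ^ 2 = 0))
        have hult : u.natAbs < n := by
          have := natAbs_lt_of_pow4_lt hu0 ha (hu4 ▸ hma)
          omega
        have hvlt : v.natAbs < n := by
          have := natAbs_lt_of_pow4_lt hv0 ha (hv4 ▸ hna)
          omega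
        have hxne : x ≠ 0 := by omega
        rcases hw with hw | hw
        · have heq : u ^ 4 = v ^ 4 + w ^ 2 := by linear_combination -hu4 + hv4 + hw
          rcases IH u.natAbs hult u v w le_rfl heq with h0 | h0
          · rw [h0] at hv4
            exact hn_ne (pow_eq_zero_iff two_ne_zero |>.mp (by linarith [hv4] : nn ^ 2 = 0))
          · rw [h0] at hw; norm_num at hw
            exact hxne (by rw [hxm]; linear_combination hw)
        · have heq : v ^ 4 = u ^ 4 + w ^ 2 := by linear_combination hu4 - hv4 - hw
          rcases IH v.natAbs hvlt v u w le_rfl heq with h0 | h0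
          · rw [h0] at hu4
            exact hm_ne (pow_eq_zero_iff two_ne_zero |>.mp (by linarith [hu4] : m ^ 2 = 0))
          · rw [h0] at hw; norm_num at hw
            exact hxne (by rw [hxm]; linear_combination hw)
      -- one of p, q is odd
      rcases Int.emod_two_eq p with hp2 | hp2
      · have hq_odd : q % 2 = 1 := by
          rcases Int.emod_two_eq q with hq2 | hq2
          · exfalso
            obtain ⟨s, hs⟩ := Int.dvd_of_emod_eq_zero hp2
            obtain ⟨t, ht⟩ := Int.dvd_of_emod_eq_zero hq2
            obtain ⟨i', hi'⟩ : ∃ i', a = 2 * i' + 1 := ⟨a / 2, by omega⟩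
            rw [hs, ht, hi'] at hsum
            have : 4 * s ^ 2 + 4 * t ^ 2 = 4 * i' ^ 2 + 4 * i' + 1 := by
              linear_combination hsum
            omega
          · exact hq2
        exact inner q p hp0 hq_odd hco_pq.symm (by linear_combination hsum)
          (by linear_combination hPQ)
      · exact inner p q hq0 hp2 hco_pq hsum hPQ
    · -- CASE: b odd
      obtain ⟨i, hi⟩ : ∃ i, a = 2 * i + 1 := ⟨a / 2, by omega⟩
      obtain ⟨j, hj⟩ : ∃ j, b = 2 * j + 1 := ⟨b / 2, by omega⟩
      obtain ⟨P, hP⟩ : ∃ P, a ^ 2 - b ^ 2 = 2 * P :=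
        ⟨2*i^2+2*i-2*j^2-2*j, by rw [hi, hj]; ring⟩
      obtain ⟨Q, hQ⟩ : ∃ Q, a ^ 2 + b ^ 2 = 2 * Q :=
        ⟨2*i^2+2*i+2*j^2+2*j+1, by rw [hi, hj]; ring⟩
      have hc2 : c ^ 2 = 4 * (P * Q) := by
        linear_combination -h + (a ^ 2 + b ^ 2) * hP + (2 * P) * hQ
      obtain ⟨c1, hc1⟩ : (2:ℤ) ∣ c := by
        rw [← Int.pow_dvd_pow_iff (two_ne_zero)]
        exact ⟨P * Q, hc2⟩
      have hPQ : P * Q = c1 ^ 2 := by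
        have h4 : (4:ℤ) * (P * Q) = 4 * c1 ^ 2 := by
          rw [hc1] at hc2; linear_combination -hc2
        exact mul_left_cancel₀ (by norm_num) h4
      have hPQco : IsCoprime P Q := by
        obtain ⟨x, y, hxy⟩ := (hco.pow : IsCoprime (a ^ 2) (b ^ 2))
        refine ⟨x - y, x + y, mul_left_cancel₀ (two_ne_zero) ?_⟩
        linear_combination 2 * hxy - (x - y) * hP - (x + y) * hQ
      have hab2 : b ^ 2 < a ^ 2 := by
        have h1 : b ^ 4 < a ^ 4 := by linarith [pow_pos hc 2]
        exact sq_lt_sq_of_pow4_lt h1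
      have hPpos : 0 < P := by linarith
      have hQpos : 0 < Q := by linarith [pow_pos ha 2, pow_pos hb 2]
      obtain ⟨p, hpor⟩ := Int.sq_of_isCoprime hPQco hPQ
      have hp : P = p ^ 2 := by
        rcases hpor with h' | h'
        · exact h'
        · exfalso; linarith [sq_nonneg p]
      obtain ⟨q, hqor⟩ := Int.sq_of_isCoprime (c := c1) hPQco.symm (by linear_combination hPQ)
      have hq : Q = q ^ 2 := by
        rcases hqor with h' | h'
        · exact h'
        · exfalso; linarith [sq_nonneg q]
      rw [hp] at hP hPpos
      rw [hq] at hQ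
      have hq4 : q ^ 4 = p ^ 4 + (a * b) ^ 2 := by
        have h4 : (4:ℤ) * q ^ 4 = 4 * (p ^ 4 + (a * b) ^ 2) := by
          linear_combination (a ^ 2 - b ^ 2 + 2 * p ^ 2) * hP - (a ^ 2 + b ^ 2 + 2 * q ^ 2) * hQ
        exact mul_left_cancel₀ (by norm_num) h4
      have hqlt : q.natAbs < n := by
        have hq2a : q ^ 2 < a ^ 2 := by linarith [pow_pos hb 2]
        have := natAbs_lt_of_sq_lt hq2a
        omega
      rcases IH q.natAbs hqlt q p (a * b) le_rfl hq4 with h0 | h0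
      · rw [h0] at hPpos; norm_num at hPpos
      · have : 0 < a * b := mul_pos ha hb
        omega

/-- Fermat's right triangle theorem (by descent): `a⁴ = b⁴ + c²` forces `b = 0` or `c = 0`. -/
private theorem fermat44 : ∀ n : ℕ, ∀ a b c : ℤ, a.natAbs ≤ n → a ^ 4 = b ^ 4 + c ^ 2 →
    b = 0 ∨ c = 0 := by
  intro n
  induction n using Nat.strong_induction_on with
  | _ n IH =>
  intro a b c han h
  by_contra hbc
  push_neg at hbc
  obtain ⟨hb0, hc0⟩ := hbc
  have ha0 : a ≠ 0 := by
    rintro rfl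
    have h1 : 0 < b ^ 4 := by positivity
    have h2 : 0 ≤ c ^ 2 := sq_nonneg c
    linarith
  have habs : |a| ^ 4 = |b| ^ 4 + |c| ^ 2 := by
    rw [(by decide : Even 4).pow_abs, (by decide : Even 4).pow_abs, (by decide : Even 2).pow_abs]
    exact h
  exact fermat44_pos n IH |a| |b| |c| (abs_pos.mpr ha0) (abs_pos.mpr hb0) (abs_pos.mpr hc0)
    (by rw [Int.natAbs_abs]; exact han) habs

/-- The genus-one curve `C₁₆ : y² = (x²-4)(x²+4)` over `ℚ` has exactly two affine rational
points. -/
theorem C16_rational_points :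
    {p : ℚ × ℚ | p.2 ^ 2 = (p.1 ^ 2 - 4) * (p.1 ^ 2 + 4)} = {(2, 0), (-2, 0)} := by
  ext ⟨x, y⟩
  simp only [Set.mem_setOf_eq, Set.mem_insert_iff, Set.mem_singleton_iff, Prod.mk.injEq]
  constructor
  · intro h
    have hdpos : 0 < x.den := x.pos
    have hden : ((x.den : ℚ)) ≠ 0 := by positivity
    have hxd : (x.num : ℚ) = x * (x.den : ℚ) := by
      have h1 : (x.num : ℚ) / (x.den : ℚ) = x := Rat.num_div_den x
      rw [div_eq_iff hden] at h1
      exact h1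
    set z : ℚ := y * (x.den : ℚ) ^ 2 with hz
    have hz2 : z ^ 2 = ((x.num ^ 4 - 16 * (x.den : ℤ) ^ 4 : ℤ) : ℚ) := by
      push_cast
      rw [hxd]
      linear_combination ((x.den : ℚ)) ^ 4 * h
    have hzden : z.den = 1 := by
      have h1 : (z ^ 2).den = 1 := by rw [hz2]; exact Rat.den_intCast _
      have h2 : (z ^ 2).den = z.den ^ 2 := Rat.den_pow z 2
      have h3 : z.den ∣ 1 := by
        rw [← h1, h2]; exact dvd_pow_self z.den two_ne_zero
      exact Nat.dvd_one.mp h3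
    obtain ⟨Z, hZ⟩ : ∃ Z : ℤ, z = (Z : ℚ) := by
      refine ⟨z.num, ?_⟩
      conv_lhs => rw [← Rat.num_div_den z, hzden]
      simp
    have hZeq : Z ^ 2 = x.num ^ 4 - 16 * (x.den : ℤ) ^ 4 := by
      rw [hZ] at hz2
      exact_mod_cast hz2
    have hferm : x.num ^ 4 = (2 * (x.den : ℤ)) ^ 4 + Z ^ 2 := by linear_combination -hZeq
    rcases fermat44 x.num.natAbs x.num (2 * (x.den : ℤ)) Z le_rfl hferm with h0 | h0
    · exfalso; omega
    · have hz0 : z = 0 := by rw [hZ, h0]; norm_num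
      have hy0 : y = 0 := by
        have hd' : ((x.den : ℚ)) ^ 2 ≠ 0 := by positivity
        exact (mul_eq_zero.mp (hz ▸ hz0)).resolve_right hd'
      subst hy0
      have hx : x = 2 ∨ x = -2 := by
        have h1 : (x - 2) * (x + 2) * (x ^ 2 + 4) = 0 := by linear_combination -h
        have h2 : (x : ℚ) ^ 2 + 4 ≠ 0 := by positivity
        rcases mul_eq_zero.mp h1 with h3 | h3
        · rcases mul_eq_zero.mp h3 with h4 | h4
          · left; linarith
          · right; linarith
        · exact absurd h3 h2
      exact hx.imp (fun h' => ⟨h', rfl⟩) (fun h' => ⟨h', rfl⟩)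
  · rintro (⟨rfl, rfl⟩ | ⟨rfl, rfl⟩) <;> norm_num
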